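/- Let b_μ = sup(supp μ) ∈ (0,∞] and a_μ = inf(supp μ) ∈ [−∞,0). Then the full integrals defining the two branches diverge: ∫_{(0,∞)} [n([s,∞)) · (1 + μ̄(s) − μ̄(G_μ⁻¹(D_μ(s))))]⁻¹ dμ(s) = ∞ and ∫_{(−∞,0)} [n((−∞,s]) · (1 + μ̄(D_μ⁻¹(G_μ(s))) − μ̄(s))]⁻¹ dμ(s) = ∞; in particular ψ₊(y) = ∞ for every y ≥ b_μ and ψ₋(z) = ∞ for every z ≥ −a_μ. -/

import Mathlib

open MeasureTheory Filter
open scoped ENNReal Topology Classical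

/-- Topological support of a Borel measure on ℝ. -/
def measSupport (μ : MeasureTheory.Measure ℝ) : Set ℝ :=
  {x | ∀ U : Set ℝ, IsOpen U → x ∈ U → 0 < μ U}

/-- `D_μ(y) = ∫_{[0,y]} n([s,∞))⁻¹ dμ(s)` for `y ≥ 0` (equal to `0` for `y < 0`). -/
noncomputable def Dmu (μ n : MeasureTheory.Measure ℝ) (y : ℝ) : ℝ≥0∞ :=
  ∫⁻ s in Set.Icc (0 : ℝ) y, (n (Set.Ici s))⁻¹ ∂μ

/-- `G_μ(x) = ∫_{[x,0]} n((−∞,s])⁻¹ dμ(s)` for `x ≤ 0` (equal to `0` for `x > 0`). -/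
noncomputable def Gmu (μ n : MeasureTheory.Measure ℝ) (x : ℝ) : ℝ≥0∞ :=
  ∫⁻ s in Set.Icc x (0 : ℝ), (n (Set.Iic s))⁻¹ ∂μ

/-- The set `{y ≥ 0 : D_μ(y) > v}`; its infimum is the right-continuous inverse
`D_μ⁻¹(v)`, with `D_μ⁻¹(v) = ∞` when the set is empty. -/
def DinvSet (μ n : MeasureTheory.Measure ℝ) (v : ℝ≥0∞) : Set ℝ :=
  {y : ℝ | 0 ≤ y ∧ v < Dmu μ n y}

/-- The set `{x ≤ 0 : G_μ(x) > v}`; its supremum is the right-continuous inverse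
`G_μ⁻¹(v)`, with `G_μ⁻¹(v) = −∞` when the set is empty. -/
def GinvSet (μ n : MeasureTheory.Measure ℝ) (v : ℝ≥0∞) : Set ℝ :=
  {x : ℝ | x ≤ 0 ∧ v < Gmu μ n x}

/-- `μ̄(D_μ⁻¹(v))`, with the convention `μ̄(∞) = 0`. -/
noncomputable def mubarDinv (μ n : MeasureTheory.Measure ℝ) (v : ℝ≥0∞) : ℝ :=
  if (DinvSet μ n v).Nonempty then (μ (Set.Ici (sInf (DinvSet μ n v)))).toReal else 0

/-- `μ̄(G_μ⁻¹(v))`, with the convention `μ̄(−∞) = 1`. -/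
noncomputable def mubarGinv (μ n : MeasureTheory.Measure ℝ) (v : ℝ≥0∞) : ℝ :=
  if (GinvSet μ n v).Nonempty then (μ (Set.Ici (sSup (GinvSet μ n v)))).toReal else 1

/-- `n([D_μ⁻¹(v),∞))`, with the convention that it is `0` when `D_μ⁻¹(v) = ∞`. -/
noncomputable def nDinv (μ n : MeasureTheory.Measure ℝ) (v : ℝ≥0∞) : ℝ≥0∞ :=
  if (DinvSet μ n v).Nonempty then n (Set.Ici (sInf (DinvSet μ n v))) else 0

/-- `n((−∞,G_μ⁻¹(v)])`, with the convention that it is `0` when `G_μ⁻¹(v) = −∞`. -/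
noncomputable def nGinv (μ n : MeasureTheory.Measure ℝ) (v : ℝ≥0∞) : ℝ≥0∞ :=
  if (GinvSet μ n v).Nonempty then n (Set.Iic (sSup (GinvSet μ n v))) else 0

/-- The integrand `[n([s,∞)) · (1 + μ̄(s) − μ̄(G_μ⁻¹(D_μ(s))))]⁻¹` of `ψ₊`. -/
noncomputable def psiPlusIntegrand (μ n : MeasureTheory.Measure ℝ) (s : ℝ) : ℝ≥0∞ :=
  (n (Set.Ici s) *
    ENNReal.ofReal (1 + (μ (Set.Ici s)).toReal - mubarGinv μ n (Dmu μ n s)))⁻¹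

/-- `ψ₊(y) = ∫_{[0,y]} [n([s,∞)) · (1 + μ̄(s) − μ̄(G_μ⁻¹(D_μ(s))))]⁻¹ dμ(s)`. -/
noncomputable def psiPlus (μ n : MeasureTheory.Measure ℝ) (y : ℝ) : ℝ≥0∞ :=
  ∫⁻ s in Set.Icc (0 : ℝ) y, psiPlusIntegrand μ n s ∂μ

/-- The integrand `[n((−∞,s]) · (1 + μ̄(D_μ⁻¹(G_μ(s))) − μ̄(s))]⁻¹` of `ψ₋`. -/
noncomputable def psiMinusIntegrand (μ n : MeasureTheory.Measure ℝ) (s : ℝ) : ℝ≥0∞ :=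
  (n (Set.Iic s) *
    ENNReal.ofReal (1 + mubarDinv μ n (Gmu μ n s) - (μ (Set.Ici s)).toReal))⁻¹

/-- `ψ₋(z) = ∫_{[−z,0]} [n((−∞,s]) · (1 + μ̄(D_μ⁻¹(G_μ(s))) − μ̄(s))]⁻¹ dμ(s)`. -/
noncomputable def psiMinus (μ n : MeasureTheory.Measure ℝ) (z : ℝ) : ℝ≥0∞ :=
  ∫⁻ s in Set.Icc (-z) (0 : ℝ), psiMinusIntegrand μ n s ∂μ

/-- The set `{y ≥ 0 : ψ₊(y) ≥ l}` whose infimum is the left-continuous inverse `φ₊(l)`. -/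
def phiPlusSet (μ n : MeasureTheory.Measure ℝ) (l : ℝ) : Set ℝ :=
  {y : ℝ | 0 ≤ y ∧ ENNReal.ofReal l ≤ psiPlus μ n y}

/-- The set `{z ≥ 0 : ψ₋(z) ≥ l}` whose infimum is the left-continuous inverse `φ₋(l)`. -/
def phiMinusSet (μ n : MeasureTheory.Measure ℝ) (l : ℝ) : Set ℝ :=
  {z : ℝ | 0 ≤ z ∧ ENNReal.ofReal l ≤ psiMinus μ n z}

/-- `φ₊(l) = inf{y ≥ 0 : ψ₊(y) ≥ l}`. -/
noncomputable def phiPlus (μ n : MeasureTheory.Measure ℝ) (l : ℝ) : ℝ :=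
  sInf (phiPlusSet μ n l)

/-- `φ₋(l) = inf{z ≥ 0 : ψ₋(z) ≥ l}`. -/
noncomputable def phiMinus (μ n : MeasureTheory.Measure ℝ) (l : ℝ) : ℝ :=
  sInf (phiMinusSet μ n l)

/-- `n([φ₊(l),∞))`, with the convention that it is `0` when `φ₊(l) = inf ∅ = ∞`. -/
noncomputable def nPhiPlus (μ n : MeasureTheory.Measure ℝ) (l : ℝ) : ℝ≥0∞ :=
  if (phiPlusSet μ n l).Nonempty then n (Set.Ici (phiPlus μ n l)) else 0

/-- `n((−∞,−φ₋(l)])`, with the convention that it is `0` when `φ₋(l) = inf ∅ = ∞`. -/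
noncomputable def nPhiMinus (μ n : MeasureTheory.Measure ℝ) (l : ℝ) : ℝ≥0∞ :=
  if (phiMinusSet μ n l).Nonempty then n (Set.Iic (-(phiMinus μ n l))) else 0

/-- `∫₀^L [n((−∞,−φ₋(s)]) + n([φ₊(s),∞))] ds` for an upper limit `L ∈ [0,∞]`. -/
noncomputable def cutInt (μ n : MeasureTheory.Measure ℝ) (L : ℝ≥0∞) : ℝ≥0∞ :=
  ∫⁻ s in {s : ℝ | 0 < s ∧ ENNReal.ofReal s < L},
    (nPhiMinus μ n s + nPhiPlus μ n s)

/-- `exp(−a)` for `a ∈ [0,∞]`, with `exp(−∞) = 0`. -/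
noncomputable def expNegE (a : ℝ≥0∞) : ℝ :=
  if a = ⊤ then 0 else Real.exp (-a.toReal)

/-- `ρ(l) = exp(−∫₀^l [n((−∞,−φ₋(s)]) + n([φ₊(s),∞))] ds)`. -/
noncomputable def rho (μ n : MeasureTheory.Measure ℝ) (l : ℝ) : ℝ≥0∞ :=
  ENNReal.ofReal (expNegE (cutInt μ n (ENNReal.ofReal l)))

open Set

/-!
Put `ν₊ = n([s,∞))⁻¹ · μ|_{[0,∞)}` and `ν₋ = n((−∞,s])⁻¹ · μ|_{(−∞,0]}`, so that
`D_μ(y) = ν₊((−∞,y])`, `G_μ(x) = ν₋([x,∞))` and the compatibility hypothesis reads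
`ν₊(ℝ) = ν₋(ℝ)`. If this common mass is infinite, the integrand of `ψ₊` is at least
`n([s,∞))⁻¹ / 2`, whose integral over `(0,∞)` is `ν₊((0,∞)) / 2 = ∞`. Otherwise the right and
left tails of `μ` are dominated by those of `ν₊` and `ν₋`, and with `c = G_μ⁻¹(D_μ(s))` the mass balance
`ν₊(ℝ) = ν₋(ℝ)` gives `1 − μ̄(c) = μ((−∞,c)) ≲ ν₋((−∞,c)) ≤ ν₊((s,∞))`. Hence the integrand of
`ψ₊` dominates a multiple of `dν₊(s) / ν₊((s,∞))`, whose integral diverges for a finite atomless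
measure. The negative branch is the positive branch of the pair reflected by `x ↦ −x`.
-/

namespace ENNReal

lemma inv_mul_inv_le (a b : ℝ≥0∞) : a⁻¹ * b⁻¹ ≤ (a * b)⁻¹ := by
  by_cases h : a = 0 ∧ b = ∞ ∨ a = ∞ ∧ b = 0
  · rcases h with ⟨rfl, rfl⟩ | ⟨rfl, rfl⟩ <;> simp
  · push Not at h
    rw [ENNReal.mul_inv (not_and_or.1 fun h' => h.1 h'.1 h'.2)
      (not_and_or.1 fun h' => h.2 h'.1 h'.2)]

end ENNReal

lemma ofReal_one_sub_toReal_measure {α : Type*} [MeasurableSpace α] {μ : Measure α}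
    [IsProbabilityMeasure μ] {s : Set α} (hs : MeasurableSet s) :
    ENNReal.ofReal (1 - (μ s).toReal) = μ sᶜ := by
  rw [ENNReal.ofReal_sub _ ENNReal.toReal_nonneg, ENNReal.ofReal_one,
    ENNReal.ofReal_toReal (measure_ne_top μ s), prob_compl_eq_one_sub hs]

lemma mul_measure_le_withDensity_apply {α : Type*} [MeasurableSpace α] {μ : Measure α}
    {f : α → ℝ≥0∞} {s : Set α} (hs : MeasurableSet s) {w : ℝ≥0∞} (h : ∀ x ∈ s, w ≤ f x) :
    w * μ s ≤ μ.withDensity f s := by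
  rw [withDensity_apply _ hs, ← setLIntegral_const]
  exact setLIntegral_mono' hs h

section LinearOrder

variable {α : Type*} [LinearOrder α] [MeasurableSpace α]

lemma exists_measure_Ioi_le_mul {μ ν : Measure α} [IsFiniteMeasure μ] [IsFiniteMeasure ν]
    {t : α} {w : ℝ≥0∞} (hμ : μ (Ioi t) ≠ 0) (hw : w ≠ 0)
    (h : ∀ c, t ≤ c → w * μ (Ioi c) ≤ ν (Ioi c)) :
    ∃ K ≠ ∞, ∀ c, μ (Ioi c) ≤ K * ν (Ioi c) := by
  have hwt := h t le_rfl
  have hw_top : w ≠ ∞ := by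
    rintro rfl
    rw [ENNReal.top_mul hμ] at hwt
    exact measure_ne_top ν _ (top_le_iff.1 hwt)
  have hνt : ν (Ioi t) ≠ 0 := ((ENNReal.mul_pos hw hμ).trans_le hwt).ne'
  refine ⟨w⁻¹ + μ univ * (ν (Ioi t))⁻¹, by finiteness, fun c => ?_⟩
  rcases le_total t c with htc | hct
  · calc μ (Ioi c) = w⁻¹ * (w * μ (Ioi c)) := by
          rw [← mul_assoc, ENNReal.inv_mul_cancel hw hw_top, one_mul]
      _ ≤ w⁻¹ * ν (Ioi c) := by gcongr; exact h c htc
      _ ≤ _ := by gcongr; exact le_self_add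
  · calc μ (Ioi c) ≤ μ univ * (ν (Ioi t))⁻¹ * ν (Ioi t) := by
          rw [mul_assoc, ENNReal.inv_mul_cancel hνt (measure_ne_top _ _), mul_one]
          exact measure_mono (subset_univ _)
      _ ≤ μ univ * (ν (Ioi t))⁻¹ * ν (Ioi c) := by gcongr
      _ ≤ _ := by gcongr; exact le_add_self

variable [TopologicalSpace α] [OrderTopology α] [DenselyOrdered α] [FirstCountableTopology α]

lemma measure_Iio_le_of_forall_lt [NoMinOrder α] {ν : Measure α} {c : α} {b : ℝ≥0∞}
    (h : ∀ x < c, ν (Iio x) ≤ b) : ν (Iio c) ≤ b := by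
  obtain ⟨u, hu, hlt, hlim⟩ := exists_seq_strictMono_tendsto c
  rw [← (isLUB_of_tendsto_atTop hu.monotone hlim).iUnion_Iio_eq,
    Monotone.measure_iUnion fun i j hij => Iio_subset_Iio (hu.monotone hij)]
  exact iSup_le fun k => h _ (hlt k)

lemma measure_Ioi_le_of_forall_gt [NoMaxOrder α] {ν : Measure α} {c : α} {b : ℝ≥0∞}
    (h : ∀ x > c, ν (Ioi x) ≤ b) : ν (Ioi c) ≤ b :=
  measure_Iio_le_of_forall_lt (α := αᵒᵈ) h

lemma exists_gt_measure_Ioi_ne_zero [NoMaxOrder α] {ν : Measure α} {a : α}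
    (h : ν (Ioi a) ≠ 0) : ∃ b, a < b ∧ ν (Ioi b) ≠ 0 := by
  by_contra! hb
  exact h (le_zero_iff.1 (measure_Ioi_le_of_forall_gt fun b hab => (hb b hab).le))

lemma exists_lt_measure_Iio_ne_zero [NoMinOrder α] {ν : Measure α} {a : α}
    (h : ν (Iio a) ≠ 0) : ∃ b, b < a ∧ ν (Iio b) ≠ 0 :=
  exists_gt_measure_Ioi_ne_zero (α := αᵒᵈ) h

end LinearOrder

section Tail

variable (ν : Measure ℝ) [IsFiniteMeasure ν] [NullSingletonClass ν]

lemma continuous_measureReal_Ioi : Continuous fun x => ν.real (Ioi x) := by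
  have key : ∀ x, ν.real (Ioi x) = ν.real (Ioi 0) - ∫ _ in 0..x, (1 : ℝ) ∂ν := by
    intro x
    rw [intervalIntegral.integral_const', smul_eq_mul, mul_one]
    rcases le_total 0 x with h | h <;>
    · rw [Ioc_eq_empty (not_lt.2 h), measureReal_empty, ← Ioc_union_Ioi_eq_Ioi h,
        measureReal_union (Ioc_disjoint_Ioi le_rfl) measurableSet_Ioi]
      ring
  rw [funext key]
  exact continuous_const.sub ((integrable_const 1).continuous_primitive 0)

lemma exists_measure_Ioi_eq {a : ℝ} {r : ℝ≥0∞} (hr : r ≠ 0) (hra : r ≤ ν (Ioi a)) :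
    ∃ u, a ≤ u ∧ ν (Ioi u) = r := by
  have hlim : Tendsto (fun x => ν (Ioi x)) atTop (𝓝 0) := by
    have h := tendsto_measure_iInter_atTop (μ := ν)
      (fun x : ℝ => measurableSet_Ioi.nullMeasurableSet) antitone_Ioi ⟨0, measure_ne_top _ _⟩
    rwa [show ⋂ x : ℝ, Ioi x = ∅ from iInter_eq_empty_iff.2 fun x => ⟨x, lt_irrefl x⟩,
      measure_empty] at h
  obtain ⟨b, hbr, hab⟩ :=
    ((hlim.eventually (gt_mem_nhds (pos_iff_ne_zero.2 hr))).and (eventually_ge_atTop a)).exists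
  have hr_top : r ≠ ∞ := ne_top_of_le_ne_top (measure_ne_top _ _) hra
  obtain ⟨u, hu, hur⟩ := intermediate_value_Icc' hab (continuous_measureReal_Ioi ν).continuousOn
    ⟨ENNReal.toReal_mono hr_top hbr.le, ENNReal.toReal_mono (measure_ne_top _ _) hra⟩
  exact ⟨u, hu.1, (ENNReal.toReal_eq_toReal_iff' (measure_ne_top _ _) hr_top).1 hur⟩

/-- The tail masses `ν(Ioi s)` run continuously through every level, and each dyadic band of
levels contributes at least `1/2`. -/
theorem lintegral_inv_measure_Ioi_eq_top {a : ℝ} (ha : ν (Ioi a) ≠ 0) :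
    ∫⁻ s in Ioi a, (ν (Ioi s))⁻¹ ∂ν = ∞ := by
  set r : ℕ → ℝ≥0∞ := fun k => ν (Ioi a) * 2⁻¹ ^ k with hr
  have hr0 : ∀ k, r k ≠ 0 := fun k => mul_ne_zero ha (by simp)
  have hr_top : ∀ k, r k ≠ ∞ := fun k => ENNReal.mul_ne_top (measure_ne_top _ _) (by simp)
  have hr_succ : ∀ k, r (k + 1) = r k / 2 := fun k => by
    simp only [hr, pow_succ, mul_assoc, div_eq_mul_inv]
  have hr_le : ∀ k, r k ≤ ν (Ioi a) := fun k =>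
    mul_le_of_le_one_right' (pow_le_one₀ zero_le (by norm_num))
  choose u hau hu using fun k => exists_measure_Ioi_eq ν (hr0 k) (hr_le k)
  have hu_mono : Monotone u := monotone_nat_of_le_succ fun k => by
    by_contra! hk
    have := measure_mono (μ := ν) (Ioi_subset_Ioi hk.le)
    rw [hu, hu, hr_succ] at this
    exact (ENNReal.half_lt_self (hr0 k) (hr_top k)).not_ge this
  have hband : ∀ k, 2⁻¹ ≤ ∫⁻ s in Ioc (u k) (u (k + 1)), (ν (Ioi s))⁻¹ ∂ν := fun k => by
    have hmass : ν (Ioc (u k) (u (k + 1))) = r k / 2 := by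
      rw [← Ioi_sdiff_Ioi, measure_sdiff (Ioi_subset_Ioi (hu_mono k.le_succ))
        measurableSet_Ioi.nullMeasurableSet (measure_ne_top _ _), hu, hu, hr_succ,
        ENNReal.sub_half (hr_top k)]
    calc (2⁻¹ : ℝ≥0∞) = ν (Ioc (u k) (u (k + 1))) * (r k)⁻¹ := by
          rw [hmass, ENNReal.div_eq_inv_mul, mul_assoc, ENNReal.mul_inv_cancel (hr0 k) (hr_top k),
            mul_one]
      _ = ∫⁻ _ in Ioc (u k) (u (k + 1)), (r k)⁻¹ ∂ν := by rw [setLIntegral_const, mul_comm]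
      _ ≤ _ := setLIntegral_mono' measurableSet_Ioc fun s hs =>
          ENNReal.inv_le_inv.2 (hu k ▸ measure_mono (Ioi_subset_Ioi hs.1.le))
  refine top_le_iff.1 ?_
  calc ∞ = ∑' _ : ℕ, (2⁻¹ : ℝ≥0∞) := (ENNReal.tsum_const_eq_top_of_ne_zero (by simp)).symm
    _ ≤ ∑' k, ∫⁻ s in Ioc (u k) (u (k + 1)), (ν (Ioi s))⁻¹ ∂ν := ENNReal.tsum_le_tsum hband
    _ = ∫⁻ s in ⋃ k, Ioc (u k) (u (k + 1)), (ν (Ioi s))⁻¹ ∂ν :=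
        (lintegral_iUnion (fun _ => measurableSet_Ioc) hu_mono.pairwise_disjoint_on_Ioc_succ _).symm
    _ ≤ _ := lintegral_mono_set <|
        iUnion_subset fun k => Ioc_subset_Ioi_self.trans (Ioi_subset_Ioi (hau k))

end Tail

noncomputable def nuPlus (μ n : Measure ℝ) : Measure ℝ :=
  (μ.restrict (Ici 0)).withDensity fun s => (n (Ici s))⁻¹

noncomputable def nuMinus (μ n : Measure ℝ) : Measure ℝ :=
  (μ.restrict (Iic 0)).withDensity fun s => (n (Iic s))⁻¹

section Branch

variable {μ n : Measure ℝ}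

instance [NullSingletonClass μ] : NullSingletonClass (nuPlus μ n) := by
  unfold nuPlus; infer_instance

lemma nuPlus_apply {A : Set ℝ} (hA : MeasurableSet A) :
    nuPlus μ n A = ∫⁻ s in A ∩ Ici 0, (n (Ici s))⁻¹ ∂μ := by
  rw [nuPlus, withDensity_apply _ hA, Measure.restrict_restrict hA]

lemma nuMinus_apply {A : Set ℝ} (hA : MeasurableSet A) :
    nuMinus μ n A = ∫⁻ s in A ∩ Iic 0, (n (Iic s))⁻¹ ∂μ := by
  rw [nuMinus, withDensity_apply _ hA, Measure.restrict_restrict hA]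

lemma Dmu_eq_nuPlus_Iic (y : ℝ) : Dmu μ n y = nuPlus μ n (Iic y) := by
  rw [nuPlus_apply measurableSet_Iic, inter_comm, Ici_inter_Iic, Dmu]

lemma Gmu_eq_nuMinus_Ici (x : ℝ) : Gmu μ n x = nuMinus μ n (Ici x) := by
  rw [nuMinus_apply measurableSet_Ici, Ici_inter_Iic, Gmu]

lemma Gmu_antitone : Antitone (Gmu μ n) :=
  fun _ _ hxy => lintegral_mono_set (Icc_subset_Icc_left hxy)

lemma nuPlus_univ : nuPlus μ n univ = ⨆ y, Dmu μ n y := by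
  simp_rw [Dmu_eq_nuPlus_Iic]
  exact tendsto_nhds_unique (tendsto_measure_Iic_atTop _)
    (tendsto_atTop_iSup fun _ _ h => measure_mono (Iic_subset_Iic.2 h))

lemma nuMinus_univ : nuMinus μ n univ = ⨆ x, Gmu μ n x := by
  simp_rw [Gmu_eq_nuMinus_Ici]
  exact tendsto_nhds_unique (tendsto_measure_Ici_atBot _)
    (tendsto_atBot_iSup fun _ _ h => measure_mono (Ici_subset_Ici.2 h))

lemma nuPlus_Ioi_zero [NullSingletonClass μ] : nuPlus μ n (Ioi 0) = nuPlus μ n univ := by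
  rw [← measure_add_measure_compl (measurableSet_Iic (a := (0 : ℝ))), compl_Iic,
    nuPlus_apply measurableSet_Iic, Iic_inter_Ici, Icc_self,
    setLIntegral_measure_zero _ _ (measure_singleton 0), zero_add]

lemma measurable_inv_measure_Ici (n : Measure ℝ) : Measurable fun s => (n (Ici s))⁻¹ :=
  Monotone.measurable fun _ _ h => ENNReal.inv_le_inv.2 (measure_mono (Ici_subset_Ici.2 h))

lemma setLIntegral_nuPlus {a : ℝ} (ha : 0 ≤ a) {g : ℝ → ℝ≥0∞} (hg : Measurable g) :
    ∫⁻ s in Ioi a, g s ∂nuPlus μ n = ∫⁻ s in Ioi a, (n (Ici s))⁻¹ * g s ∂μ := by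
  rw [nuPlus, restrict_withDensity measurableSet_Ioi, lintegral_withDensity_eq_lintegral_mul _
    (measurable_inv_measure_Ici n) hg,
    Measure.restrict_restrict measurableSet_Ioi, inter_eq_left.2 (Ioi_subset_Ici ha)]
  rfl

lemma mul_measure_Ioi_le_nuPlus {t c : ℝ} (ht : 0 ≤ t) (htc : t ≤ c) :
    (n (Ici t))⁻¹ * μ (Ioi c) ≤ nuPlus μ n (Ioi c) := by
  have h := mul_measure_le_withDensity_apply (μ := μ.restrict (Ici 0))
    (f := fun s => (n (Ici s))⁻¹) (measurableSet_Ioi (a := c)) (w := (n (Ici t))⁻¹)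
    fun s hs => ENNReal.inv_le_inv.2 (measure_mono (Ici_subset_Ici.2 (htc.trans hs.le)))
  rwa [Measure.restrict_apply measurableSet_Ioi,
    inter_eq_left.2 (Ioi_subset_Ici (ht.trans htc))] at h

lemma mul_measure_Iio_le_nuMinus {t c : ℝ} (ht : t ≤ 0) (hct : c ≤ t) :
    (n (Iic t))⁻¹ * μ (Iio c) ≤ nuMinus μ n (Iio c) := by
  have h := mul_measure_le_withDensity_apply (μ := μ.restrict (Iic 0))
    (f := fun s => (n (Iic s))⁻¹) (measurableSet_Iio (a := c)) (w := (n (Iic t))⁻¹)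
    fun s hs => ENNReal.inv_le_inv.2 (measure_mono (Iic_subset_Iic.2 (hs.le.trans hct)))
  rwa [Measure.restrict_apply measurableSet_Iio,
    inter_eq_left.2 (Iio_subset_Iic (hct.trans ht))] at h

lemma nuMinus_Iio_sSup_GinvSet_le [IsFiniteMeasure (nuMinus μ n)]
    (hV : nuPlus μ n univ = nuMinus μ n univ) {s : ℝ}
    (hne : (GinvSet μ n (Dmu μ n s)).Nonempty) :
    nuMinus μ n (Iio (sSup (GinvSet μ n (Dmu μ n s)))) ≤ nuPlus μ n (Ioi s) := by
  refine measure_Iio_le_of_forall_lt fun x hx => ?_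
  obtain ⟨x₀, ⟨-, hx₀⟩, hxx₀⟩ := exists_lt_of_lt_csSup hne hx
  have hDG : nuPlus μ n (Iic s) ≤ nuMinus μ n (Ici x) := by
    rw [← Dmu_eq_nuPlus_Iic, ← Gmu_eq_nuMinus_Ici]
    exact (hx₀.trans_le (Gmu_antitone hxx₀.le)).le
  refine (ENNReal.add_le_add_iff_right (measure_ne_top (nuMinus μ n) (Ici x))).1 ?_
  calc nuMinus μ n (Iio x) + nuMinus μ n (Ici x)
      = nuPlus μ n (Iic s) + nuPlus μ n (Ioi s) := by
        rw [← compl_Ici, add_comm, measure_add_measure_compl measurableSet_Ici, ← compl_Iic,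
          measure_add_measure_compl measurableSet_Iic, hV]
    _ ≤ nuMinus μ n (Ici x) + nuPlus μ n (Ioi s) := by gcongr
    _ = nuPlus μ n (Ioi s) + nuMinus μ n (Ici x) := add_comm _ _

lemma ofReal_one_sub_mubarGinv_le [IsProbabilityMeasure μ] [IsFiniteMeasure (nuMinus μ n)]
    (hV : nuPlus μ n univ = nuMinus μ n univ) {K : ℝ≥0∞}
    (hK : ∀ c, μ (Iio c) ≤ K * nuMinus μ n (Iio c)) (s : ℝ) :
    ENNReal.ofReal (1 - mubarGinv μ n (Dmu μ n s)) ≤ K * nuPlus μ n (Ioi s) := by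
  rw [mubarGinv]
  split_ifs with hne
  · rw [ofReal_one_sub_toReal_measure measurableSet_Ici, compl_Ici]
    exact (hK _).trans (mul_le_mul_right (nuMinus_Iio_sSup_GinvSet_le hV hne) _)
  · simp

lemma inv_mul_inv_le_psiPlusIntegrand {s : ℝ} {B : ℝ≥0∞}
    (h : ENNReal.ofReal (1 + (μ (Ici s)).toReal - mubarGinv μ n (Dmu μ n s)) ≤ B) :
    (n (Ici s))⁻¹ * B⁻¹ ≤ psiPlusIntegrand μ n s :=
  (ENNReal.inv_mul_inv_le _ _).trans (ENNReal.inv_le_inv.2 (mul_le_mul_right h _))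

theorem lintegral_Ioi_psiPlusIntegrand_eq_top_of_eq_top [IsProbabilityMeasure μ]
    [NullSingletonClass μ] (h : nuPlus μ n univ = ∞) :
    ∫⁻ s in Ioi 0, psiPlusIntegrand μ n s ∂μ = ∞ := by
  have hbound (s : ℝ) : (n (Ici s))⁻¹ * 2⁻¹ ≤ psiPlusIntegrand μ n s := by
    refine inv_mul_inv_le_psiPlusIntegrand ((ENNReal.ofReal_le_ofReal (q := 2) ?_).trans (by simp))
    have h1 : (μ (Ici s)).toReal ≤ 1 := by
      simpa using ENNReal.toReal_mono ENNReal.one_ne_top (prob_le_one (s := Ici s))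
    have h2 : 0 ≤ mubarGinv μ n (Dmu μ n s) := by
      rw [mubarGinv]; split_ifs <;> positivity
    linarith
  refine top_le_iff.1 ?_
  calc ∞ = ∫⁻ _ in Ioi 0, 2⁻¹ ∂nuPlus μ n := by
        rw [setLIntegral_const, nuPlus_Ioi_zero, h, ENNReal.mul_top (by simp)]
    _ = ∫⁻ s in Ioi 0, (n (Ici s))⁻¹ * 2⁻¹ ∂μ := setLIntegral_nuPlus le_rfl measurable_const
    _ ≤ _ := lintegral_mono hbound

lemma exists_measure_Ioi_le_mul_nuPlus [IsFiniteMeasure μ] [IsFiniteMeasure (nuPlus μ n)]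
    (hpos : μ (Ioi 0) ≠ 0) (hn : ∀ s, 0 < s → n (Ici s) ≠ ∞) :
    ∃ K ≠ ∞, ∀ c, μ (Ioi c) ≤ K * nuPlus μ n (Ioi c) := by
  obtain ⟨t, ht, hμt⟩ := exists_gt_measure_Ioi_ne_zero hpos
  exact exists_measure_Ioi_le_mul hμt (ENNReal.inv_ne_zero.2 (hn t ht))
    fun c hc => mul_measure_Ioi_le_nuPlus ht.le hc

lemma exists_measure_Iio_le_mul_nuMinus [IsFiniteMeasure μ] [IsFiniteMeasure (nuMinus μ n)]
    (hneg : μ (Iio 0) ≠ 0) (hn : ∀ s < 0, n (Iic s) ≠ ∞) :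
    ∃ K ≠ ∞, ∀ c, μ (Iio c) ≤ K * nuMinus μ n (Iio c) := by
  obtain ⟨t, ht, hμt⟩ := exists_lt_measure_Iio_ne_zero hneg
  have : IsFiniteMeasure (α := ℝᵒᵈ) μ := ‹_›
  have : IsFiniteMeasure (α := ℝᵒᵈ) (nuMinus μ n) := ‹_›
  exact exists_measure_Ioi_le_mul (α := ℝᵒᵈ) hμt (ENNReal.inv_ne_zero.2 (hn t ht))
    fun c hc => mul_measure_Iio_le_nuMinus ht.le hc

lemma ofReal_psiPlus_factor_le [IsProbabilityMeasure μ] [NullSingletonClass μ]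
    [IsFiniteMeasure (nuMinus μ n)] (hV : nuPlus μ n univ = nuMinus μ n univ) {K₁ K₂ : ℝ≥0∞}
    (hK₁ : ∀ c, μ (Ioi c) ≤ K₁ * nuPlus μ n (Ioi c))
    (hK₂ : ∀ c, μ (Iio c) ≤ K₂ * nuMinus μ n (Iio c)) (s : ℝ) :
    ENNReal.ofReal (1 + (μ (Ici s)).toReal - mubarGinv μ n (Dmu μ n s))
      ≤ (K₁ + K₂) * nuPlus μ n (Ioi s) := by
  calc ENNReal.ofReal (1 + (μ (Ici s)).toReal - mubarGinv μ n (Dmu μ n s))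
      ≤ ENNReal.ofReal (μ (Ici s)).toReal + ENNReal.ofReal (1 - mubarGinv μ n (Dmu μ n s)) := by
        rw [add_comm 1, add_sub_assoc]
        exact ENNReal.ofReal_add_le
    _ ≤ K₁ * nuPlus μ n (Ioi s) + K₂ * nuPlus μ n (Ioi s) := by
        rw [ENNReal.ofReal_toReal (measure_ne_top _ _),
          ← measure_congr (Ioi_ae_eq_Ici' (measure_singleton s))]
        exact add_le_add (hK₁ s) (ofReal_one_sub_mubarGinv_le hV hK₂ s)
    _ = (K₁ + K₂) * nuPlus μ n (Ioi s) := (add_mul _ _ _).symm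

theorem lintegral_Ioi_psiPlusIntegrand_eq_top_of_ne_top [IsProbabilityMeasure μ]
    [NullSingletonClass μ] (hneg : 0 < μ (Iio 0)) (hpos : 0 < μ (Ioi 0))
    (hnfin : ∀ s : ℝ, 0 < s → n (Ici s) < ⊤ ∧ n (Iic (-s)) < ⊤)
    (hV : nuPlus μ n univ = nuMinus μ n univ) (hfin : nuPlus μ n univ ≠ ∞) :
    ∫⁻ s in Ioi 0, psiPlusIntegrand μ n s ∂μ = ∞ := by
  have : IsFiniteMeasure (nuPlus μ n) := ⟨hfin.lt_top⟩
  have : IsFiniteMeasure (nuMinus μ n) := ⟨(hV ▸ hfin).lt_top⟩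
  obtain ⟨K₁, hK₁, hμK₁⟩ :=
    exists_measure_Ioi_le_mul_nuPlus (n := n) hpos.ne' fun s hs => (hnfin s hs).1.ne
  obtain ⟨K₂, hK₂, hμK₂⟩ := exists_measure_Iio_le_mul_nuMinus (n := n) hneg.ne'
    fun s hs => by simpa using (hnfin (-s) (neg_pos.2 hs)).2.ne
  have hK : K₁ + K₂ ≠ ∞ := ENNReal.add_ne_top.2 ⟨hK₁, hK₂⟩
  have hν : nuPlus μ n (Ioi 0) ≠ 0 := fun h0 => hpos.ne' (by simpa [h0] using hμK₁ 0)
  have hmeas : Measurable fun s => (nuPlus μ n (Ioi s))⁻¹ :=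
    Monotone.measurable fun _ _ h => ENNReal.inv_le_inv.2 (measure_mono (Ioi_subset_Ioi h))
  refine top_le_iff.1 ?_
  calc ∞ = ∫⁻ s in Ioi 0, (K₁ + K₂)⁻¹ * (nuPlus μ n (Ioi s))⁻¹ ∂nuPlus μ n := by
        rw [lintegral_const_mul _ hmeas, lintegral_inv_measure_Ioi_eq_top _ hν,
          ENNReal.mul_top (ENNReal.inv_ne_zero.2 hK)]
    _ = ∫⁻ s in Ioi 0, (n (Ici s))⁻¹ * ((K₁ + K₂)⁻¹ * (nuPlus μ n (Ioi s))⁻¹) ∂μ :=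
        setLIntegral_nuPlus le_rfl (hmeas.const_mul _)
    _ ≤ _ := lintegral_mono fun s => by
        rw [← ENNReal.mul_inv (Or.inr (measure_ne_top _ _)) (Or.inl hK)]
        exact inv_mul_inv_le_psiPlusIntegrand (ofReal_psiPlus_factor_le hV hμK₁ hμK₂ s)

theorem lintegral_Ioi_psiPlusIntegrand_eq_top [IsProbabilityMeasure μ] [NullSingletonClass μ]
    (hneg : 0 < μ (Iio 0)) (hpos : 0 < μ (Ioi 0))
    (hnfin : ∀ s : ℝ, 0 < s → n (Ici s) < ⊤ ∧ n (Iic (-s)) < ⊤)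
    (hcompat : (⨆ y : ℝ, Dmu μ n y) = (⨆ x : ℝ, Gmu μ n x)) :
    ∫⁻ s in Ioi 0, psiPlusIntegrand μ n s ∂μ = ∞ := by
  rcases eq_or_ne (nuPlus μ n univ) ∞ with h | h
  · exact lintegral_Ioi_psiPlusIntegrand_eq_top_of_eq_top h
  · exact lintegral_Ioi_psiPlusIntegrand_eq_top_of_ne_top hneg hpos hnfin
      (by rw [nuPlus_univ, nuMinus_univ, hcompat]) h

end Branch

section Reflection

variable {μ n : Measure ℝ}

lemma setLIntegral_measure_neg (μ : Measure ℝ) (f : ℝ → ℝ≥0∞) (s : Set ℝ) :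
    ∫⁻ x in s, f x ∂μ.neg = ∫⁻ x in -s, f (-x) ∂μ := by
  change ∫⁻ x in s, f x ∂μ.map (MeasurableEquiv.neg ℝ) = _
  rw [MeasurableEquiv.restrict_map, lintegral_map_equiv]
  rfl

lemma Dmu_neg (y : ℝ) : Dmu μ.neg n.neg y = Gmu μ n (-y) := by
  simp [Dmu, Gmu, setLIntegral_measure_neg, Measure.neg_apply]

lemma Gmu_neg (x : ℝ) : Gmu μ.neg n.neg x = Dmu μ n (-x) := by
  simp [Dmu, Gmu, setLIntegral_measure_neg, Measure.neg_apply]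

lemma GinvSet_neg (v : ℝ≥0∞) : GinvSet μ.neg n.neg v = -DinvSet μ n v := by
  ext x
  simp [GinvSet, DinvSet, Gmu_neg]

lemma toReal_measure_Iic_eq_one_sub [IsProbabilityMeasure μ] [NullSingletonClass μ] (c : ℝ) :
    (μ (Iic c)).toReal = 1 - (μ (Ici c)).toReal := by
  have h := congrArg ENNReal.toReal
    (measure_add_measure_compl (μ := μ) (measurableSet_Iic (a := c)))
  rw [compl_Iic, measure_congr (Ioi_ae_eq_Ici' (measure_singleton c)), measure_univ,
    ENNReal.toReal_add (measure_ne_top _ _) (measure_ne_top _ _), ENNReal.toReal_one] at h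
  linarith

lemma mubarGinv_neg [IsProbabilityMeasure μ] [NullSingletonClass μ] (v : ℝ≥0∞) :
    mubarGinv μ.neg n.neg v = 1 - mubarDinv μ n v := by
  simp only [mubarGinv, mubarDinv, GinvSet_neg, Set.nonempty_neg, Real.sSup_neg,
    Measure.neg_apply, neg_Ici, neg_neg]
  split_ifs
  · exact toReal_measure_Iic_eq_one_sub _
  · ring

lemma psiPlusIntegrand_neg [IsProbabilityMeasure μ] [NullSingletonClass μ] (s : ℝ) :
    psiPlusIntegrand μ.neg n.neg (-s) = psiMinusIntegrand μ n s := by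
  simp only [psiPlusIntegrand, psiMinusIntegrand, Measure.neg_apply, neg_Ici, neg_neg, Dmu_neg,
    mubarGinv_neg, toReal_measure_Iic_eq_one_sub]
  ring_nf

instance [IsProbabilityMeasure μ] : IsProbabilityMeasure μ.neg :=
  ⟨by rw [Measure.neg_apply, neg_univ, measure_univ]⟩

instance [NullSingletonClass μ] : NullSingletonClass μ.neg :=
  ⟨fun x => by rw [Measure.neg_apply, neg_singleton, measure_singleton]⟩

theorem lintegral_Iio_psiMinusIntegrand_eq_top [IsProbabilityMeasure μ] [NullSingletonClass μ]
    (hneg : 0 < μ (Iio 0)) (hpos : 0 < μ (Ioi 0))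
    (hnfin : ∀ s : ℝ, 0 < s → n (Ici s) < ⊤ ∧ n (Iic (-s)) < ⊤)
    (hcompat : (⨆ y : ℝ, Dmu μ n y) = (⨆ x : ℝ, Gmu μ n x)) :
    ∫⁻ s in Iio 0, psiMinusIntegrand μ n s ∂μ = ∞ := by
  have h := lintegral_Ioi_psiPlusIntegrand_eq_top (μ := μ.neg) (n := n.neg)
    (by rwa [Measure.neg_apply, neg_Iio, neg_zero]) (by rwa [Measure.neg_apply, neg_Ioi, neg_zero])
    (fun s hs => by simpa [Measure.neg_apply, and_comm] using hnfin s hs)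
    (by simp_rw [Dmu_neg, Gmu_neg, neg_surjective.iSup_comp (Gmu μ n),
      neg_surjective.iSup_comp (Dmu μ n), hcompat])
  simpa only [setLIntegral_measure_neg, neg_Ioi, neg_zero, psiPlusIntegrand_neg] using h

end Reflection

section Support

variable {μ n : Measure ℝ}

lemma measSupport_eq_support (μ : Measure ℝ) : measSupport μ = μ.support := by
  ext x
  simp only [measSupport, Measure.support_eq_forall_isOpen, mem_ofPred_eq]
  exact forall_congr' fun U => Imp.swap

lemma measure_Ioi_eq_zero_of_measSupport_le {y : ℝ} (hy : ∀ x ∈ measSupport μ, x ≤ y) :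
    μ (Ioi y) = 0 := by
  by_contra h
  obtain ⟨x, hyx, hx⟩ := Measure.nonempty_inter_support_of_pos (pos_iff_ne_zero.2 h)
  exact (hy x (measSupport_eq_support μ ▸ hx)).not_gt hyx

lemma measure_Iio_eq_zero_of_le_measSupport {a : ℝ} (ha : ∀ x ∈ measSupport μ, a ≤ x) :
    μ (Iio a) = 0 := by
  by_contra h
  obtain ⟨x, hxa, hx⟩ := Measure.nonempty_inter_support_of_pos (pos_iff_ne_zero.2 h)
  exact (ha x (measSupport_eq_support μ ▸ hx)).not_gt hxa

lemma psiPlus_eq_lintegral_Ioi [NullSingletonClass μ] {y : ℝ} (hy : μ (Ioi y) = 0) :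
    psiPlus μ n y = ∫⁻ s in Ioi 0, psiPlusIntegrand μ n s ∂μ := by
  refine setLIntegral_congr ((Ioc_ae_eq_Icc' (measure_singleton 0)).symm.trans ?_)
  rw [← Ioi_sdiff_Ioi]
  exact sdiff_null_ae_eq_self hy

lemma psiMinus_eq_lintegral_Iio [NullSingletonClass μ] {z : ℝ} (hz : μ (Iio (-z)) = 0) :
    psiMinus μ n z = ∫⁻ s in Iio 0, psiMinusIntegrand μ n s ∂μ := by
  refine setLIntegral_congr ((Ico_ae_eq_Icc' (measure_singleton 0)).symm.trans ?_)
  rw [← Iio_sdiff_Iio]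
  exact sdiff_null_ae_eq_self hz

end Support

theorem fullBranchIntegralsDiverge_general
    (μ n : MeasureTheory.Measure ℝ) [MeasureTheory.IsProbabilityMeasure μ]
    (hatomless : ∀ x : ℝ, μ {x} = 0)
    (hneg : 0 < μ (Set.Iio (0 : ℝ))) (hpos : 0 < μ (Set.Ioi (0 : ℝ)))
    (hnfin : ∀ s : ℝ, 0 < s → n (Set.Ici s) < ⊤ ∧ n (Set.Iic (-s)) < ⊤)
    (hcompat : (⨆ y : ℝ, Dmu μ n y) = (⨆ x : ℝ, Gmu μ n x))
    :
    (∫⁻ s in Set.Ioi (0 : ℝ), psiPlusIntegrand μ n s ∂μ = ⊤) ∧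
    (∫⁻ s in Set.Iio (0 : ℝ), psiMinusIntegrand μ n s ∂μ = ⊤) ∧
    (∀ y : ℝ, (∀ x ∈ measSupport μ, x ≤ y) → psiPlus μ n y = ⊤) ∧
    (∀ z : ℝ, (∀ x ∈ measSupport μ, -z ≤ x) → psiMinus μ n z = ⊤) := by
  have : NullSingletonClass μ := ⟨hatomless⟩
  have hplus := lintegral_Ioi_psiPlusIntegrand_eq_top hneg hpos hnfin hcompat
  have hminus := lintegral_Iio_psiMinusIntegrand_eq_top hneg hpos hnfin hcompat
  refine ⟨hplus, hminus, fun y hy => ?_, fun z hz => ?_⟩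
  · rw [psiPlus_eq_lintegral_Ioi (measure_Ioi_eq_zero_of_measSupport_le hy), hplus]
  · rw [psiMinus_eq_lintegral_Iio (measure_Iio_eq_zero_of_le_measSupport hz), hminus]

/-- With `b_μ = sup(supp μ) ∈ (0,∞]` and `a_μ = inf(supp μ) ∈ [−∞,0)`,
the full integrals defining the two branches diverge:
`∫_{(0,∞)} [n([s,∞))·(1 + μ̄(s) − μ̄(G_μ⁻¹(D_μ(s))))]⁻¹ dμ(s) = ∞` and
`∫_{(−∞,0)} [n((−∞,s])·(1 + μ̄(D_μ⁻¹(G_μ(s))) − μ̄(s))]⁻¹ dμ(s) = ∞`;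
in particular `ψ₊(y) = ∞` for every `y ≥ b_μ` (i.e. every `y` dominating the support)
and `ψ₋(z) = ∞` for every `z ≥ −a_μ` (i.e. whenever `−z` lies below the support). -/
theorem fullBranchIntegralsDiverge
    (μ n : MeasureTheory.Measure ℝ) [MeasureTheory.IsProbabilityMeasure μ]
    (hatomless : ∀ x : ℝ, μ {x} = 0)
    (hneg : 0 < μ (Set.Iio (0 : ℝ))) (hpos : 0 < μ (Set.Ioi (0 : ℝ)))
    (hnfin : ∀ s : ℝ, 0 < s → n (Set.Ici s) < ⊤ ∧ n (Set.Iic (-s)) < ⊤)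
    (hnsupp : ∀ x ∈ measSupport μ, 0 < n (Set.Iic x) ∧ 0 < n (Set.Ici x))
    (hcompat : (⨆ y : ℝ, Dmu μ n y) = (⨆ x : ℝ, Gmu μ n x))
    :
    (∫⁻ s in Set.Ioi (0 : ℝ), psiPlusIntegrand μ n s ∂μ = ⊤) ∧
    (∫⁻ s in Set.Iio (0 : ℝ), psiMinusIntegrand μ n s ∂μ = ⊤) ∧
    (∀ y : ℝ, (∀ x ∈ measSupport μ, x ≤ y) → psiPlus μ n y = ⊤) ∧
    (∀ z : ℝ, (∀ x ∈ measSupport μ, -z ≤ x) → psiMinus μ n z = ⊤) :=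
  fullBranchIntegralsDiverge_general μ n hatomless hneg hpos hnfin hcompat
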